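/- Let R be a nonsingular M-matrix with e'R ≥ 0' and p a nonnegative probability vector. Then the matrix R(I − pe') has a simple zero eigenvalue, and all its other eigenvalues have strictly positive real part. -/

import Mathlib

/-!
Write `Q = I - p eᵀ`. Since `s` is not an eigenvalue of `N`, `R = s I - N` is invertible, so the
kernel of `R Q` is that of `Q`, the line through `p`.

For the other eigenvalues: `R Q` and `Q R` have the same nonzero eigenvalues, and
`Q R = s I - M` with `M = N + p (eᵀ R) ≥ 0`, whose columns all sum to `s` because `eᵀ p = 1`.
Summing the moduli of the entries of an eigenvector shows that every eigenvalue `ν` of `M` has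
`|ν| ≤ s`. Hence a nonzero eigenvalue `μ = s - ν` of `R Q` lies in the closed disc of radius `s`
about `s` without being `0`, which forces `Re μ > 0`.
-/

open Matrix

lemma Complex.re_pos_of_norm_ofReal_sub_le {s : ℝ} {μ : ℂ} (h : ‖(s : ℂ) - μ‖ ≤ s) (hμ : μ ≠ 0) :
    0 < μ.re := by
  have hs : 0 ≤ s := (norm_nonneg _).trans h
  have hsq : Complex.normSq ((s : ℂ) - μ) ≤ s ^ 2 := by
    rw [← Complex.sq_norm]
    exact pow_le_pow_left₀ (norm_nonneg _) h 2
  have hμ_sq := Complex.normSq_pos.mpr hμ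
  simp only [Complex.normSq_apply, Complex.sub_re, Complex.sub_im, Complex.ofReal_re,
    Complex.ofReal_im] at hsq hμ_sq
  nlinarith

namespace Matrix

variable {n 𝕜 : Type*} [Fintype n] [DecidableEq n] [Field 𝕜]

lemma exists_mulVec_eq_smul_of_mem_spectrum {A : Matrix n n 𝕜} {μ : 𝕜}
    (hμ : μ ∈ spectrum 𝕜 A) : ∃ x ≠ 0, A *ᵥ x = μ • x := by
  rw [← spectrum_toLin', ← Module.End.hasEigenvalue_iff_mem_spectrum] at hμ
  obtain ⟨x, hx, hx0⟩ := hμ.exists_hasEigenvector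
  exact ⟨x, hx0, Module.End.mem_eigenspace_iff.mp hx⟩

lemma norm_le_of_mem_spectrum_of_col_sum_le {M : Matrix n n ℝ} {s : ℝ} (hM : ∀ i j, 0 ≤ M i j)
    (hcol : ∀ j, ∑ i, M i j ≤ s) {μ : ℂ} (hμ : μ ∈ spectrum ℂ (M.map Complex.ofReal)) :
    ‖μ‖ ≤ s := by
  obtain ⟨z, hz0, hz⟩ := exists_mulVec_eq_smul_of_mem_spectrum hμ
  have hz_pos : 0 < ∑ i, ‖z i‖ := by
    obtain ⟨i, hi⟩ := Function.ne_iff.mp hz0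
    exact (norm_pos_iff.mpr hi).trans_le
      (Finset.single_le_sum (fun j _ => norm_nonneg (z j)) (Finset.mem_univ i))
  refine le_of_mul_le_mul_right ?_ hz_pos
  calc ‖μ‖ * ∑ i, ‖z i‖ = ∑ i, ‖∑ j, (M i j : ℂ) * z j‖ := by
        simp_rw [Finset.mul_sum, ← norm_mul, ← smul_eq_mul, ← Pi.smul_apply μ z, ← hz]
        rfl
    _ ≤ ∑ i, ∑ j, M i j * ‖z j‖ := by
        gcongr with i _
        refine (norm_sum_le _ _).trans_eq (Finset.sum_congr rfl fun j _ => ?_)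
        rw [norm_mul, Complex.norm_real, Real.norm_of_nonneg (hM i j)]
    _ = ∑ j, (∑ i, M i j) * ‖z j‖ := by
        rw [Finset.sum_comm]
        simp_rw [Finset.sum_mul]
    _ ≤ ∑ j, s * ‖z j‖ := by gcongr with j; exact hcol j
    _ = s * ∑ i, ‖z i‖ := (Finset.mul_sum _ _ _).symm

lemma mem_spectrum_map_ofReal_mul_comm {A B : Matrix n n ℝ} {μ : ℂ}
    (hμ : μ ∈ spectrum ℂ ((A * B).map Complex.ofReal)) (hμ0 : μ ≠ 0) :
    μ ∈ spectrum ℂ ((B * A).map Complex.ofReal) := by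
  have hmap (C D : Matrix n n ℝ) :
      (C * D).map Complex.ofReal = C.map Complex.ofReal * D.map Complex.ofReal :=
    Matrix.map_mul (f := Complex.ofRealHom)
  rw [hmap] at hμ ⊢
  exact ((spectrum.nonzero_mul_comm _ _).subset ⟨hμ, hμ0⟩).1

lemma map_ofReal_smul_one_sub (s : ℝ) (N : Matrix n n ℝ) :
    (s • (1 : Matrix n n ℝ) - N).map Complex.ofReal
      = algebraMap ℂ (Matrix n n ℂ) s - N.map Complex.ofReal := by
  rw [Algebra.algebraMap_eq_smul_one, Matrix.map_sub, Matrix.map_smul', Matrix.map_one] <;> simp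

lemma det_smul_one_sub_ne_zero {s : ℝ} {N : Matrix n n ℝ}
    (hs : (s : ℂ) ∉ spectrum ℂ (N.map Complex.ofReal)) : (s • (1 : Matrix n n ℝ) - N).det ≠ 0 := by
  rw [spectrum.notMem_iff, ← map_ofReal_smul_one_sub, isUnit_iff_isUnit_det] at hs
  change IsUnit (Complex.ofRealHom.mapMatrix _).det at hs
  rw [← RingHom.map_det, isUnit_iff_ne_zero] at hs
  exact (map_ne_zero _).mp hs

lemma ker_toLin'_mul_of_det_ne_zero {A : Matrix n n 𝕜} (hA : A.det ≠ 0) (B : Matrix n n 𝕜) :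
    LinearMap.ker (toLin' (A * B)) = LinearMap.ker (toLin' B) := by
  rw [toLin'_mul]
  exact LinearMap.ker_comp_of_ker_eq_bot _
    (ker_toLin'_eq_bot_iff.mpr fun _ => eq_zero_of_mulVec_eq_zero hA)

lemma one_sub_vecMulVec_mulVec (p x : n → 𝕜) :
    (1 - vecMulVec p (fun _ => (1 : 𝕜))) *ᵥ x = x - (∑ i, x i) • p := by
  ext i
  simp [sub_mulVec, vecMulVec_mulVec, dotProduct, mul_comm]

lemma ker_toLin'_one_sub_vecMulVec {p : n → 𝕜} (hp : ∑ i, p i = 1) :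
    LinearMap.ker (toLin' (1 - vecMulVec p (fun _ => (1 : 𝕜)))) = 𝕜 ∙ p := by
  ext x
  rw [LinearMap.mem_ker, toLin'_apply, one_sub_vecMulVec_mulVec, sub_eq_zero,
    Submodule.mem_span_singleton]
  constructor
  · exact fun h => ⟨_, h.symm⟩
  · rintro ⟨a, rfl⟩
    simp [← Finset.mul_sum, hp]

lemma one_sub_vecMulVec_mul (p : n → 𝕜) (A : Matrix n n 𝕜) :
    (1 - vecMulVec p (fun _ => (1 : 𝕜))) * A = A - vecMulVec p ((fun _ => (1 : 𝕜)) ᵥ* A) := by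
  rw [sub_mul, one_mul, vecMulVec_mul]

end Matrix

theorem RIpe_simple_zero_eigenvalue_general {K : ℕ} (R N : Matrix (Fin K) (Fin K) ℝ) (s : ℝ)
    (hN : ∀ i j, 0 ≤ N i j)
    (hR : R = s • (1 : Matrix (Fin K) (Fin K) ℝ) - N)
    (hρ : ∀ μ ∈ spectrum ℂ (N.map (Complex.ofReal)), ‖μ‖ < s)
    (heR : ∀ j, 0 ≤ ∑ i, R i j)
    (p : Fin K → ℝ) (hp : ∀ i, 0 ≤ p i) (hp1 : ∑ i, p i = 1) :
    Module.finrank ℝ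
        (LinearMap.ker (Matrix.toLin'
          (R * ((1 - Matrix.vecMulVec p (fun _ => (1:ℝ))) : Matrix (Fin K) (Fin K) ℝ)))) = 1 ∧
    ∀ μ ∈ spectrum ℂ
        ((R * ((1 - Matrix.vecMulVec p (fun _ => (1:ℝ))) : Matrix (Fin K) (Fin K) ℝ)).map (Complex.ofReal)),
      μ ≠ 0 → 0 < μ.re := by
  set Q : Matrix (Fin K) (Fin K) ℝ := 1 - vecMulVec p (fun _ => 1)
  refine ⟨?_, fun μ hμ hμ0 => ?_⟩
  · have hdet : R.det ≠ 0 := hR ▸ det_smul_one_sub_ne_zero fun h =>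
      (le_abs_self s).not_gt (by simpa using hρ _ h)
    have hp0 : p ≠ 0 := by rintro rfl; simp at hp1
    rw [ker_toLin'_mul_of_det_ne_zero hdet, ker_toLin'_one_sub_vecMulVec hp1,
      finrank_span_singleton hp0]
  · set M := N + vecMulVec p ((fun _ => 1) ᵥ* R)
    have hQR : Q * R = s • 1 - M := by
      rw [one_sub_vecMulVec_mul, sub_add_eq_sub_sub, ← hR]
    have hM : ∀ i j, 0 ≤ M i j := fun i j =>
      add_nonneg (hN i j) (mul_nonneg (hp i) (by simpa [vecMul, dotProduct] using heR j))
    have hcol : ∀ j, ∑ i, M i j = s := fun j =>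
      calc ∑ i, M i j = ∑ i, N i j + ∑ i, R i j := by
            simp only [M, Matrix.add_apply, Finset.sum_add_distrib, vecMulVec_apply,
              ← Finset.sum_mul, hp1, one_mul, vecMul, dotProduct]
        _ = s := by simp [hR, Finset.sum_sub_distrib, one_apply]
    have hμQR := mem_spectrum_map_ofReal_mul_comm hμ hμ0
    rw [hQR, map_ofReal_smul_one_sub, ← spectrum.singleton_sub_eq] at hμQR
    obtain ⟨_, rfl, ν, hν, rfl⟩ := hμQR
    refine Complex.re_pos_of_norm_ofReal_sub_le (s := s) ?_ hμ0
    simpa using norm_le_of_mem_spectrum_of_col_sum_le hM (fun j => (hcol j).le) hν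

/-- Let `R` be a nonsingular M-matrix with `e'R ≥ 0'` and `p` a nonnegative probability
vector. Then `R(I − pe')` has a simple zero eigenvalue (its kernel is one-dimensional),
and all its other eigenvalues have strictly positive real part. -/
theorem RIpe_simple_zero_eigenvalue {K : ℕ} (R N : Matrix (Fin K) (Fin K) ℝ) (s : ℝ)
    (hs : 0 < s) (hN : ∀ i j, 0 ≤ N i j)
    (hR : R = s • (1 : Matrix (Fin K) (Fin K) ℝ) - N)
    (hρ : ∀ μ ∈ spectrum ℂ (N.map (Complex.ofReal)), ‖μ‖ < s)
    (heR : ∀ j, 0 ≤ ∑ i, R i j)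
    (p : Fin K → ℝ) (hp : ∀ i, 0 ≤ p i) (hp1 : ∑ i, p i = 1) :
    Module.finrank ℝ
        (LinearMap.ker (Matrix.toLin'
          (R * ((1 - Matrix.vecMulVec p (fun _ => (1:ℝ))) : Matrix (Fin K) (Fin K) ℝ)))) = 1 ∧
    ∀ μ ∈ spectrum ℂ
        ((R * ((1 - Matrix.vecMulVec p (fun _ => (1:ℝ))) : Matrix (Fin K) (Fin K) ℝ)).map (Complex.ofReal)),
      μ ≠ 0 → 0 < μ.re :=
  RIpe_simple_zero_eigenvalue_general R N s hN hR hρ heR p hp hp1
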